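/- The extremal gadget X admits a 3-gel. Moreover, for every positive integer c and every good edge-labeling λ : E(X) → {1, …, c} of X, the label of the bone e = u_1 u_2 satisfies 1 < λ(e) < c. -/

import Mathlib

/-- A walk is *increasing* with respect to an edge-labeling if the sequence of labels of its
edges, traversed from the first endpoint to the last, is non-decreasing. -/
def IsIncreasing {V : Type*} (G : SimpleGraph V) (lab : Sym2 V → ℝ) {x y : V}
    (p : G.Walk x y) : Prop :=
  (p.edges.map lab).Chain' (· ≤ ·)

/-- An edge-labeling is *good* if for every ordered pair `(x, y)` of vertices there do not
exist two distinct increasing paths from `x` to `y`. -/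
def IsGoodLabeling {V : Type*} (G : SimpleGraph V) (lab : Sym2 V → ℝ) : Prop :=
  ∀ (x y : V) (p q : G.Walk x y), p.IsPath → q.IsPath →
    IsIncreasing G lab p → IsIncreasing G lab q → p = q

/-- The extremal gadget `X`, with vertices `0 = a`, `1 = u₁`, `2 = u₂`, `3 = m₁`, `4 = m₁'`,
`5 = m₂`, `6 = m₂'`: the bone `u₁u₂` together with, for each `i ∈ {1,2}`, two internally
disjoint paths of length two from `a` to `uᵢ`. -/
def ExtGadget : SimpleGraph (Fin 7) :=
  SimpleGraph.fromEdgeSet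
    {s(1, 2), s(0, 3), s(3, 1), s(0, 4), s(4, 1), s(0, 5), s(5, 2), s(0, 6), s(6, 2)}

/-!
The bone cannot carry the smallest label of a good labeling. On each side `i`, the two paths
`a mᵢ uᵢ`, `a mᵢ' uᵢ` cannot both increase towards `uᵢ`, so one of them, through `nᵢ` say,
increases from `uᵢ` to `a`. If `λ(a n₁) ≤ λ(a n₂)`, then `u₁ n₁ a n₂` and `u₁ u₂ n₂` are two
increasing paths (the second because the bone is minimal); otherwise exchange the sides.
Reversing paths shows that `-λ` is good whenever `λ` is, so the bone cannot carry the largest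
label either.

The `3`-gel labels `a mᵢ` and `mᵢ' uᵢ` by `1`, the bone by `2` and the other edges by `3`; it is
checked by enumerating the paths of `X`.
-/

instance : DecidableRel ExtGadget.Adj := fun a b =>
  decidable_of_iff (s(a, b) ∈ [s(1, 2), s(0, 3), s(3, 1), s(0, 4), s(4, 1), s(0, 5), s(5, 2),
    s(0, 6), s(6, 2)] ∧ a ≠ b) (by simp [ExtGadget])

open SimpleGraph

section Labelings

variable {V : Type*} {G : SimpleGraph V} {lab : Sym2 V → ℝ}

lemma isIncreasing_iff {x y : V} (p : G.Walk x y) :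
    IsIncreasing G lab p ↔ (p.edges.map lab).IsChain (· ≤ ·) := Iff.rfl

lemma isIncreasing_reverse_iff {x y : V} (p : G.Walk x y) :
    IsIncreasing G lab p.reverse ↔ IsIncreasing G (-lab) p := by
  simp only [isIncreasing_iff, Walk.edges_reverse, List.map_reverse, List.isChain_reverse,
    List.isChain_map, Pi.neg_apply, neg_le_neg_iff]

lemma IsGoodLabeling.neg (h : IsGoodLabeling G lab) : IsGoodLabeling G (-lab) := by
  intro x y p q hp hq hip hiq
  rw [← isIncreasing_reverse_iff] at hip hiq
  exact Walk.reverse_injective (h y x _ _ hp.reverse hq.reverse hip hiq)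

lemma IsGoodLabeling.lt_or_lt_of_two_paths_of_length_two (h : IsGoodLabeling G lab)
    {x y m m' : V}
    (hxm : G.Adj x m) (hmy : G.Adj m y) (hxm' : G.Adj x m') (hm'y : G.Adj m' y)
    (hxy : x ≠ y) (hmm' : m ≠ m') :
    lab s(y, m) < lab s(m, x) ∨ lab s(y, m') < lab s(m', x) := by
  by_contra! hle
  rw [Sym2.eq_swap (a := y), Sym2.eq_swap (a := m), Sym2.eq_swap (a := y),
    Sym2.eq_swap (a := m')] at hle
  have := h x y (.cons hxm (.cons hmy .nil)) (.cons hxm' (.cons hm'y .nil))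
    (by simp [Walk.cons_isPath_iff, hxm.ne, hmy.ne, hxy])
    (by simp [Walk.cons_isPath_iff, hxm'.ne, hm'y.ne, hxy])
    (by simpa [isIncreasing_iff] using hle.1) (by simpa [isIncreasing_iff] using hle.2)
  exact hmm' (by simpa using congrArg Walk.support this)

lemma IsGoodLabeling.false_of_increasing_two_and_three_paths (h : IsGoodLabeling G lab)
    {u v w m a : V}
    (huv : G.Adj u v) (hvw : G.Adj v w) (hum : G.Adj u m) (hma : G.Adj m a) (haw : G.Adj a w)
    (huw : u ≠ w) (hua : u ≠ a) (hmw : m ≠ w)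
    (h₁ : lab s(u, v) ≤ lab s(v, w)) (h₂ : lab s(u, m) ≤ lab s(m, a))
    (h₃ : lab s(m, a) ≤ lab s(a, w)) : False := by
  have := h u w (.cons huv (.cons hvw .nil)) (.cons hum (.cons hma (.cons haw .nil)))
    (by simp [Walk.cons_isPath_iff, huv.ne, hvw.ne, huw])
    (by simp [Walk.cons_isPath_iff, hum.ne, hma.ne, haw.ne, huw, hua, hmw])
    (by simpa [isIncreasing_iff] using h₁) (by simpa [isIncreasing_iff] using ⟨h₂, h₃⟩)
  simpa using congrArg Walk.length this

end Labelings

lemma IsGoodLabeling.exists_lt_bone {lab : Sym2 (Fin 7) → ℝ} (h : IsGoodLabeling ExtGadget lab) :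
    ∃ e ∈ ExtGadget.edgeSet, lab e < lab s(1, 2) := by
  by_contra! hmin
  have hmin' (a b : Fin 7) (hab : ExtGadget.Adj a b) : lab s(1, 2) ≤ lab s(a, b) := hmin _ hab
  obtain ⟨m, hm, hm1⟩ : ∃ m ∈ ({3, 4} : Finset (Fin 7)), lab s(1, m) ≤ lab s(m, 0) := by
    rcases h.lt_or_lt_of_two_paths_of_length_two (x := 0) (y := 1) (m := 3) (m' := 4)
      (by decide) (by decide) (by decide) (by decide) (by decide) (by decide) with h3 | h4
    exacts [⟨3, by simp, h3.le⟩, ⟨4, by simp, h4.le⟩]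
  obtain ⟨m', hm', hm'2⟩ : ∃ m' ∈ ({5, 6} : Finset (Fin 7)), lab s(2, m') ≤ lab s(m', 0) := by
    rcases h.lt_or_lt_of_two_paths_of_length_two (x := 0) (y := 2) (m := 5) (m' := 6)
      (by decide) (by decide) (by decide) (by decide) (by decide) (by decide) with h5 | h6
    exacts [⟨5, by simp, h5.le⟩, ⟨6, by simp, h6.le⟩]
  obtain ⟨h1m, hm0, h2m', hm'0, hmm', h1m', h2m⟩ : ExtGadget.Adj 1 m ∧ ExtGadget.Adj m 0 ∧
      ExtGadget.Adj 2 m' ∧ ExtGadget.Adj m' 0 ∧ m ≠ m' ∧ 1 ≠ m' ∧ 2 ≠ m := by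
    fin_cases hm <;> fin_cases hm' <;> decide
  rcases le_total (lab s(m, 0)) (lab s(0, m')) with hle | hle
  · exact h.false_of_increasing_two_and_three_paths (by decide) h2m' h1m hm0 hm'0.symm h1m'
      (by decide) hmm' (hmin' 2 m' h2m') hm1 hle
  · refine h.false_of_increasing_two_and_three_paths (by decide) h1m h2m' hm'0 hm0.symm h2m
      (by decide) hmm'.symm ?_ hm'2 ?_
    · simpa only [Sym2.eq_swap (a := (2 : Fin 7))] using hmin' 1 m h1m
    · simpa only [Sym2.eq_swap (a := m'), Sym2.eq_swap (b := m)] using hle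

section Enumeration

variable {n : ℕ} (G : SimpleGraph (Fin n)) [DecidableRel G.Adj]

def walkSupports : ℕ → Fin n → List (List (Fin n))
  | 0, x => [[x]]
  | k + 1, x => [x] :: ((List.finRange n).filter (G.Adj x ·)).flatMap
      fun y => (walkSupports k y).map (x :: ·)

lemma support_mem_walkSupports {x y : Fin n} (p : G.Walk x y) {k : ℕ} (hk : p.length ≤ k) :
    p.support ∈ walkSupports G k x := by
  induction p generalizing k with
  | nil => cases k <;> simp [walkSupports]
  | cons hadj p ih =>
    cases k with
    | zero => simp at hk
    | succ k =>
      simp only [walkSupports, Walk.support_cons, List.mem_cons, List.mem_flatMap, List.mem_map,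
        List.mem_filter, List.mem_finRange, decide_eq_true_eq, true_and]
      exact .inr ⟨_, hadj, _, ih (by simpa using hk), rfl⟩

def increasingPathSupports (f : Sym2 (Fin n) → ℕ) (x : Fin n) : List (List (Fin n)) :=
  (walkSupports G (n - 1) x).filter fun l =>
    l.Nodup ∧ ((List.zipWith (s(·, ·)) l l.tail).map f).IsChain (· ≤ ·)

lemma isGoodLabeling_of_nodup_getLast? (f : Sym2 (Fin n) → ℕ)
    (hf : ∀ x, ((increasingPathSupports G f x).map List.getLast?).Nodup) :
    IsGoodLabeling G (fun e ↦ (f e : ℝ)) := by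
  have mem {x y : Fin n} (p : G.Walk x y) (hp : p.IsPath)
      (hip : IsIncreasing G (fun e ↦ (f e : ℝ)) p) : p.support ∈ increasingPathSupports G f x := by
    have hlen : p.length ≤ n - 1 := by
      have := hp.length_lt
      simp only [Fintype.card_fin] at this
      omega
    rw [isIncreasing_iff, List.isChain_map] at hip
    simp only [increasingPathSupports, List.mem_filter, decide_eq_true_eq,
      ← Walk.edges_eq_zipWith_support, List.isChain_map]
    exact ⟨support_mem_walkSupports G p hlen, hp.support_nodup,
      hip.imp fun _ _ ↦ Nat.cast_le.mp⟩
  intro x y p q hp hq hip hiq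
  refine Walk.ext_support (List.inj_on_of_nodup_map (hf x) (mem p hp hip) (mem q hq hiq) ?_)
  simp [List.getLast?_eq_some_getLast, Walk.support_ne_nil]

end Enumeration

def boneGel : Sym2 (Fin 7) → ℕ := fun e ↦
  if e = s(1, 2) then 2
  else if e = s(0, 3) ∨ e = s(0, 5) ∨ e = s(1, 4) ∨ e = s(2, 6) then 1
  else 3

lemma isGoodLabeling_boneGel : IsGoodLabeling ExtGadget (fun e ↦ (boneGel e : ℝ)) :=
  isGoodLabeling_of_nodup_getLast? ExtGadget boneGel (by decide)

lemma ncard_image_boneGel_le : ((fun e ↦ (boneGel e : ℝ)) '' ExtGadget.edgeSet).ncard ≤ 3 := by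
  have hsub : (fun e ↦ (boneGel e : ℝ)) '' ExtGadget.edgeSet ⊆ ↑({1, 2, 3} : Finset ℝ) := by
    rintro - ⟨e, -, rfl⟩
    simp only [boneGel]
    split_ifs <;> simp
  grw [Set.ncard_le_ncard hsub (Finset.finite_toSet _), Set.ncard_coe_finset]
  exact Finset.card_le_three

/-- The extremal gadget admits a `3`-gel; moreover, for every positive integer `c` and every
good edge-labeling of the gadget with values in `{1, …, c}`, the label of the bone `u₁u₂`
satisfies `1 < λ(u₁u₂) < c`. -/
theorem extremal_gadget :
    (∃ lab : Sym2 (Fin 7) → ℝ,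
      IsGoodLabeling ExtGadget lab ∧ (lab '' ExtGadget.edgeSet).ncard ≤ 3) ∧
    ∀ c : ℕ, 0 < c → ∀ lab : Sym2 (Fin 7) → ℝ,
      (∀ e ∈ ExtGadget.edgeSet, ∃ k : ℕ, 1 ≤ k ∧ k ≤ c ∧ lab e = (k : ℝ)) →
      IsGoodLabeling ExtGadget lab →
      1 < lab s(1, 2) ∧ lab s(1, 2) < (c : ℝ) := by
  refine ⟨⟨_, isGoodLabeling_boneGel, ncard_image_boneGel_le⟩, fun c _ lab hval h ↦ ?_⟩
  have hbound (e : Sym2 (Fin 7)) (he : e ∈ ExtGadget.edgeSet) : 1 ≤ lab e ∧ lab e ≤ c := by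
    obtain ⟨k, hk1, hkc, hk⟩ := hval e he
    rw [hk]
    exact ⟨mod_cast hk1, mod_cast hkc⟩
  obtain ⟨e, he, hlt⟩ := h.exists_lt_bone
  obtain ⟨e', he', hgt⟩ := h.neg.exists_lt_bone
  rw [Pi.neg_apply, Pi.neg_apply, neg_lt_neg_iff] at hgt
  exact ⟨(hbound e he).1.trans_lt hlt, hgt.trans_le (hbound e' he').2⟩
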